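/- Let (T, (V_t)_{t∈T}) be a k-atomic tree-decomposition of a finite graph G, and let t1t2 be an edge of T. Let T_1, T_2 be the two components of T − t1t2 with t1 ∈ T_1, let G_1 := ⋃_{t∈T_1} V_t, and let X := V_{t1} ∩ V_{t2}. Then there is a connected component C of the subgraph of G induced on G_1 \ X such that every vertex x ∈ X has a neighbor in C. -/

import Mathlib

open SimpleGraph

/-- `x` and `y` lie in the same component of `G - S`:
there is a walk from `x` to `y` in `G` avoiding `S`. -/
def ConnAvoiding {V : Type} (G : SimpleGraph V) (S : Set V) (x y : V) : Prop :=
  ∃ p : G.Walk x y, ∀ v ∈ p.support, v ∉ S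

/-- `X` is a `(<k)`-inseparable set of vertices of `G`: it has at least `k` vertices and
no two of its vertices can be separated by deleting fewer than `k` vertices. -/
def IsInseparable {V : Type} (G : SimpleGraph V) (k : ℕ) (X : Set V) : Prop :=
  k ≤ X.ncard ∧
  ∀ x ∈ X, ∀ y ∈ X, x ≠ y → ∀ S : Set V, S.ncard < k → x ∉ S → y ∉ S →
    ConnAvoiding G S x y

/-- `X` is a `k`-block of `G`: a maximal `(<k)`-inseparable set of vertices. -/
def IsBlock {V : Type} (G : SimpleGraph V) (k : ℕ) (X : Set V) : Prop :=
  IsInseparable G k X ∧ ∀ Y : Set V, IsInseparable G k Y → X ⊆ Y → Y = X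

/-- The block number `β(G)`: the maximum `k` for which `G` contains a `k`-block. -/
noncomputable def blockNumber {V : Type} (G : SimpleGraph V) : ℕ :=
  sSup {k : ℕ | ∃ X : Set V, IsBlock G k X}

/-- There is a `k`-fan from `v` to `U` in `G`: `k` paths starting at `v`, otherwise
disjoint, each ending in `U` (trivial paths allowed). -/
def IsFanTo {V : Type} (G : SimpleGraph V) (k : ℕ) (v : V) (U : Set V) : Prop :=
  ∃ (e : Fin k → V) (P : ∀ i : Fin k, G.Path v (e i)),
    (∀ i, e i ∈ U) ∧
    ∀ i j : Fin k, i ≠ j →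
      ∀ w, w ∈ (P i).val.support → w ∈ (P j).val.support → w = v

/-- `X` is a `k`-fan-set: from every `x ∈ X` there is a `k`-fan to `X`. -/
def IsFanSet {V : Type} (G : SimpleGraph V) (k : ℕ) (X : Set V) : Prop :=
  ∀ x ∈ X, IsFanTo G k x X

/-- The `∞`-admissibility of `G`: the maximum `k` for which `G` contains a nonempty
`k`-fan-set. -/
noncomputable def admInf {V : Type} (G : SimpleGraph V) : ℕ :=
  sSup {k : ℕ | ∃ X : Set V, X.Nonempty ∧ IsFanSet G k X}

/-- `C` is (the vertex set of) a connected component of the subgraph of `G` induced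
on `A`: a maximal subset of `A` inducing a connected subgraph. -/
def IsCompOf {V : Type} (G : SimpleGraph V) (A C : Set V) : Prop :=
  C ⊆ A ∧ (G.induce C).Connected ∧
  ∀ D : Set V, C ⊆ D → D ⊆ A → (G.induce D).Connected → D = C

/-- `H` is a minor of `G`, via disjoint nonempty connected branch sets. -/
def IsMinor {W V : Type} (H : SimpleGraph W) (G : SimpleGraph V) : Prop :=
  ∃ B : W → Set V,
    (∀ h, (B h).Nonempty) ∧
    (∀ h, (G.induce (B h)).Connected) ∧
    (∀ h h', h ≠ h' → Disjoint (B h) (B h')) ∧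
    ∀ h h', H.Adj h h' → ∃ u ∈ B h, ∃ v ∈ B h', G.Adj u v

/-- `H` is a topological minor of `G`: there are branch vertices `φ u` and, for every
edge `uv` of `H`, a path in `G` from `φ u` to `φ v`; distinct edge-paths meet only in
branch vertices (hence only in common endpoints), and internal vertices of the paths
are not branch vertices. -/
def IsTopMinor {W V : Type} (H : SimpleGraph W) (G : SimpleGraph V) : Prop :=
  ∃ (φ : W ↪ V) (P : ∀ u v : W, H.Adj u v → G.Path (φ u) (φ v)),
    (∀ u v (h : H.Adj u v) w, w ∈ (P u v h).val.support →
        w ∈ Set.range φ → w = φ u ∨ w = φ v) ∧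
    (∀ u v (h : H.Adj u v) u' v' (h' : H.Adj u' v'), s(u, v) ≠ s(u', v') →
        ∀ w, w ∈ (P u v h).val.support → w ∈ (P u' v' h').val.support →
          w ∈ Set.range φ)

/-- A tree-decomposition of `G` with tree on node type `T`. -/
structure TreeDecomp {V : Type} (G : SimpleGraph V) (T : Type) where
  tree : SimpleGraph T
  isTree : tree.IsTree
  part : T → Set V
  part_covers : ∀ v : V, ∃ t, v ∈ part t
  part_edge : ∀ ⦃u v : V⦄, G.Adj u v → ∃ t, u ∈ part t ∧ v ∈ part t
  part_path : ∀ (t₁ t₂ t₃ : T) (p : tree.Path t₁ t₃), t₂ ∈ p.val.support →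
    part t₁ ∩ part t₃ ⊆ part t₂

/-- `m` pairwise vertex-disjoint `A`–`B` paths in `G`. -/
def DisjPaths {V : Type} (G : SimpleGraph V) (m : ℕ) (A B : Set V) : Prop :=
  ∃ (a b : Fin m → V) (P : ∀ i : Fin m, G.Path (a i) (b i)),
    (∀ i, a i ∈ A) ∧ (∀ i, b i ∈ B) ∧
    ∀ i j : Fin m, i ≠ j → ∀ w, w ∈ (P i).val.support → w ∉ (P j).val.support

/-- `a` is lexicographically smaller than `b` as `(n+1)`-tuples `(a 0, …, a n)`. -/
def FatLexLT (n : ℕ) (a b : ℕ → ℕ) : Prop :=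
  ∃ i ≤ n, (∀ j < i, a j = b j) ∧ a i < b i

namespace TreeDecomp

variable {V T : Type} {G : SimpleGraph V}

/-- The tree-decomposition has adhesion less than `k`. -/
def AdhesionLT (D : TreeDecomp G T) (k : ℕ) : Prop :=
  ∀ ⦃s t : T⦄, D.tree.Adj s t → (D.part s ∩ D.part t).ncard < k

/-- The torso of the part at node `t`: the induced subgraph on `part t`, with edges
added between any two vertices lying in a common adhesion-set at `t`. -/
def torso (D : TreeDecomp G T) (t : T) : SimpleGraph V where
  Adj u v := u ≠ v ∧ u ∈ D.part t ∧ v ∈ D.part t ∧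
    (G.Adj u v ∨ ∃ s : T, D.tree.Adj s t ∧ u ∈ D.part s ∧ v ∈ D.part s)
  symm := by
    refine ⟨?_⟩
    rintro u v ⟨h1, h2, h3, h4⟩
    refine ⟨h1.symm, h3, h2, ?_⟩
    rcases h4 with h | ⟨s, hs, hu, hv⟩
    · exact Or.inl h.symm
    · exact Or.inr ⟨s, hs, hv, hu⟩
  loopless := ⟨fun u h => h.1 rfl⟩

/-- Degree of `x` in the torso at `t`. -/
noncomputable def torsoDeg (D : TreeDecomp G T) (t : T) (x : V) : ℕ :=
  ((D.torso t).neighborSet x).ncard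

/-- The width of a tree-decomposition: `max (|V_t| - 1)`. -/
noncomputable def width [Fintype T] (D : TreeDecomp G T) : ℕ :=
  Finset.univ.sup fun t : T => (D.part t).ncard - 1

/-- Entry `i` of the fatness tuple: the number of parts of size `n - i`,
where `n = |V(G)|`. -/
noncomputable def fatness [Fintype V] (D : TreeDecomp G T) (i : ℕ) : ℕ :=
  {t : T | (D.part t).ncard = Fintype.card V - i}.ncard

/-- The tree-decomposition is `k`-atomic: it has adhesion `< k` and its fatness is
lexicographically minimum among all tree-decompositions of `G` of adhesion `< k`. -/
def IsAtomic [Fintype V] (D : TreeDecomp G T) (k : ℕ) : Prop :=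
  D.AdhesionLT k ∧
  ∀ (T' : Type) (_ : Fintype T') (D' : TreeDecomp G T'), D'.AdhesionLT k →
    ¬ FatLexLT (Fintype.card V) D'.fatness D.fatness

/-- The tree-decomposition is `k`-lean. -/
def IsLean (D : TreeDecomp G T) (k : ℕ) : Prop :=
  D.AdhesionLT k ∧
  ∀ (s t : T) (A B : Set V), A ⊆ D.part s → B ⊆ D.part t →
    A.ncard = B.ncard → A.ncard ≤ k →
    DisjPaths G A.ncard A B ∨
    ∃ u w : T, D.tree.Adj u w ∧
      (∀ p : D.tree.Path s t, s(u, w) ∈ p.val.edges) ∧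
      (D.part u ∩ D.part w).ncard < A.ncard

end TreeDecomp

/-!
Suppose no component `C` of `G₁ − X` has all of `X` in its neighbourhood. Replace the side
`T₁` of the decomposition by one copy of `T₁` for each such `C`, the copy of a node `t`
getting the part `V_t ∩ (C ∪ N_X(C))`, and attach each copy of `t₁` to `t₂`. This is again a
tree-decomposition, and each of its adhesion-sets lies in an old one. A node of `T₁` whose
part lies in a single `C ∪ N_X(C)` reappears with the same part in exactly one copy. Among the
other nodes of `T₁`, which include `t₁` since `X ⊄ C ∪ N_X(C)`, pick one of maximum size
`m ≥ |X|`; every copy of such a node, and every copy with a part inside `X`, is smaller than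
`m`. So above `m` the number of parts of each size is unchanged, while the number of parts of
size `m` drops: the fatness decreases, contradicting atomicity.
-/

namespace SimpleGraph

variable {α β : Type*}

/-- Each edge `xy` of `H` is a bridge: its image under `φ` is a bridge of `T`, and a walk
avoiding `xy` maps to a walk avoiding that image. -/
theorem isAcyclic_of_forall_adj_exists_injOn {H : SimpleGraph α} {T : SimpleGraph β}
    (hT : T.IsAcyclic)
    (h : ∀ ⦃x y⦄, H.Adj x y → ∃ (φ : α → β) (S : Set α), x ∈ S ∧ y ∈ S ∧ S.InjOn φ ∧
      ∀ ⦃a b⦄, H.Adj a b → φ a = φ b ∨ a ∈ S ∧ b ∈ S ∧ T.Adj (φ a) (φ b)) :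
    H.IsAcyclic := by
  rw [isAcyclic_iff_forall_adj_isBridge]
  intro x y hxy
  obtain ⟨φ, S, hx, hy, hinj, hφ⟩ := h hxy
  have hφxy : T.Adj (φ x) (φ y) :=
    ((hφ hxy).resolve_left fun he => hxy.ne (hinj hx hy he)).2.2
  rw [isBridge_iff]
  intro hr
  apply isBridge_iff.1 (isAcyclic_iff_forall_adj_isBridge.1 hT hφxy)
  rw [reachable_iff_reflTransGen] at hr ⊢
  refine hr.lift' φ fun a b hab => ?_
  rw [deleteEdges_adj, Set.mem_singleton_iff] at hab
  show Relation.ReflTransGen _ (φ a) (φ b)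
  rcases hφ hab.1 with he | ⟨ha, hb, hadj⟩
  · rw [he]
  · refine Relation.ReflTransGen.single (deleteEdges_adj.2 ⟨hadj, fun he => hab.2 ?_⟩)
    rcases Sym2.eq_iff.1 (Set.mem_singleton_iff.1 he) with ⟨h₁, h₂⟩ | ⟨h₁, h₂⟩
    · rw [hinj ha hx h₁, hinj hb hy h₂]
    · rw [hinj ha hy h₁, hinj hb hx h₂, Sym2.eq_swap]

theorem Reachable.reachable_deleteEdges_or {G : SimpleGraph α} {u v w : α}
    (h : G.Reachable w u) :
    (G.deleteEdges {s(u, v)}).Reachable u w ∨ (G.deleteEdges {s(u, v)}).Reachable v w := by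
  rw [reachable_iff_reflTransGen] at h
  induction h using Relation.ReflTransGen.head_induction_on with
  | refl => exact Or.inl Reachable.rfl
  | @head w w' hadj _ ih =>
    by_cases he : s(w, w') = s(u, v)
    · rcases Sym2.eq_iff.1 he with ⟨rfl, -⟩ | ⟨rfl, -⟩
      · exact Or.inl Reachable.rfl
      · exact Or.inr Reachable.rfl
    · have hadj' : (G.deleteEdges {s(u, v)}).Adj w' w := by
        simp [hadj.symm, Sym2.eq_swap, he]
      exact ih.imp (·.trans hadj'.reachable) (·.trans hadj'.reachable)

theorem IsAcyclic.support_subset_of_preconnected_induce {T : SimpleGraph β} (hT : T.IsAcyclic)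
    {S : Set β} (hS : (T.induce S).Preconnected) {a c : β} (ha : a ∈ S) (hc : c ∈ S)
    (p : T.Path a c) : ∀ b ∈ p.val.support, b ∈ S := by
  classical
  obtain ⟨w⟩ := hS ⟨a, ha⟩ ⟨c, hc⟩
  let w' := w.map (Embedding.induce S).toHom
  obtain rfl : p = ⟨w'.bypass, w'.bypass_isPath⟩ := (hT.subsingleton_path a c).elim _ _
  intro b hb
  obtain ⟨x, -, rfl⟩ := List.mem_map.1 (w.support_map _ ▸ w'.support_bypass_subset_support hb)
  exact x.2

theorem Walk.reachable_induce_of_map {G : SimpleGraph α} {H : SimpleGraph β} (f : G →g H)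
    {S : Set β} {a b : α} (w : G.Walk a b) (hw : ∀ x ∈ w.support, f x ∈ S) (ha : f a ∈ S)
    (hb : f b ∈ S) : (H.induce S).Reachable ⟨f a, ha⟩ ⟨f b, hb⟩ :=
  ((w.map f).induce S (by simpa [Walk.support_map] using hw)).reachable

theorem ConnectedComponent.isCompOf_image {V : Type} {G : SimpleGraph V} {A : Set V}
    (c : (G.induce A).ConnectedComponent) : IsCompOf G A (Subtype.val '' c.supp) := by
  obtain ⟨a₀, ha₀⟩ := c.nonempty_supp
  have : Nonempty (Subtype.val '' c.supp) := ⟨⟨a₀, a₀, ha₀, rfl⟩⟩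
  refine ⟨Subtype.coe_image_subset _ _, ⟨?_⟩, fun S hcS hSA hS => ?_⟩
  · rintro ⟨_, a, ha, rfl⟩ ⟨_, b, hb, rfl⟩
    let f : c.toSimpleGraph →g G.induce (Subtype.val '' c.supp) :=
      ⟨fun x => ⟨x.1.1, x.1, x.2, rfl⟩, id⟩
    exact (c.reachable_toSimpleGraph ha hb).map f
  · refine Set.Subset.antisymm (fun d hd => ?_) hcS
    have hr := (hS.preconnected ⟨a₀, hcS ⟨a₀, ha₀, rfl⟩⟩ ⟨d, hd⟩).map (induceHomOfLE G hSA).toHom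
    exact ⟨⟨d, hSA hd⟩, (ConnectedComponent.sound hr).symm.trans ha₀, rfl⟩

end SimpleGraph

theorem fatLexLT_of_proj {α β : Type*} [Finite β] {n m : ℕ} (hm : m ≤ n) {a : α → ℕ}
    {b : β → ℕ} {f : α → β} (heq : ∀ x, m ≤ a x → a x = b (f x))
    (hinj : ∀ x x', m ≤ a x → m ≤ a x' → f x = f x' → x = x')
    (hsurj : ∀ y, m < b y → ∃ x, f x = y ∧ m ≤ a x)
    {y₀ : β} (hy₀ : b y₀ = m) (hy₀' : ∀ x, f x = y₀ → a x < m) :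
    FatLexLT n (fun i => {x | a x = n - i}.ncard) (fun i => {y | b y = n - i}.ncard) := by
  have himage : ∀ σ, m ≤ σ → f '' {x | a x = σ} ⊆ {y | b y = σ} := by
    rintro σ hσ _ ⟨x, hx, rfl⟩
    exact (heq x (hx ▸ hσ)).symm.trans hx
  have hcard : ∀ σ, m ≤ σ → {x | a x = σ}.ncard = (f '' {x | a x = σ}).ncard := fun σ hσ =>
    (Set.InjOn.ncard_image fun x (hx : a x = σ) x' (hx' : a x' = σ) =>
      hinj x x' (hx ▸ hσ) (hx' ▸ hσ)).symm
  refine ⟨n - m, Nat.sub_le n m, fun j hj => ?_, ?_⟩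
  · have hσ : m < n - j := by omega
    show {x | a x = n - j}.ncard = {y | b y = n - j}.ncard
    rw [hcard _ hσ.le]
    refine congrArg Set.ncard ((himage _ hσ.le).antisymm fun y hy => ?_)
    obtain ⟨x, rfl, hx⟩ := hsurj y (hy ▸ hσ)
    exact ⟨x, (heq x hx).trans hy, rfl⟩
  · show {x | a x = n - (n - m)}.ncard < {y | b y = n - (n - m)}.ncard
    rw [Nat.sub_sub_self hm, hcard m le_rfl]
    refine Set.ncard_lt_ncard ⟨himage m le_rfl, fun h => ?_⟩
    obtain ⟨x, hx, rfl⟩ := h hy₀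
    exact (hy₀' x rfl).ne hx

namespace TreeDecomp

variable {V T : Type} {G : SimpleGraph V} (D : TreeDecomp G T) (t₁ t₂ : T)

/-! `side t₁ t₂ t₁` and `side t₁ t₂ t₂` are the components `T₁ ∋ t₁` and `T₂ ∋ t₂` of
`T − t₁t₂`; `adhesionSet` is `X`, `strictSide` is `G₁ \ X`, and `piece c` is `C ∪ N_X(C)` for
the component `C` of `G₁ \ X` given by `c`. -/

abbrev cut : SimpleGraph T := D.tree.deleteEdges {s(t₁, t₂)}

abbrev side (r : T) : (D.cut t₁ t₂).ConnectedComponent :=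
  (D.cut t₁ t₂).connectedComponentMk r

abbrev adhesionSet : Set V := D.part t₁ ∩ D.part t₂

abbrev strictSide : Set V :=
  (⋃ t ∈ (D.side t₁ t₂ t₁ : Set T), D.part t) \ D.adhesionSet t₁ t₂

abbrev Comp : Type := (G.induce (D.strictSide t₁ t₂)).ConnectedComponent

def piece (c : D.Comp t₁ t₂) : Set V :=
  Subtype.val '' c.supp ∪ {x ∈ D.adhesionSet t₁ t₂ | ∃ y ∈ Subtype.val '' c.supp, G.Adj x y}

variable {D t₁ t₂}

lemma mem_side_iff {r t : T} :
    t ∈ D.side t₁ t₂ r ↔ ∃ p : D.tree.Walk r t, s(t₁, t₂) ∉ p.edges := by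
  rw [← reachable_deleteEdges_iff_exists_walk, reachable_comm]
  exact ConnectedComponent.eq

lemma mem_side_or (t : T) : t ∈ D.side t₁ t₂ t₁ ∨ t ∈ D.side t₁ t₂ t₂ := by
  have := (D.isTree.connected.preconnected t t₁).reachable_deleteEdges_or (v := t₂)
  exact this.imp (ConnectedComponent.sound ·.symm) (ConnectedComponent.sound ·.symm)

lemma notMem_side_of_mem_side (h12 : D.tree.Adj t₁ t₂) {t : T} (h₁ : t ∈ D.side t₁ t₂ t₁) :
    t ∉ D.side t₁ t₂ t₂ := fun h₂ =>
  isBridge_iff.1 (isAcyclic_iff_forall_adj_isBridge.1 D.isTree.isAcyclic h12)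
    (ConnectedComponent.exact (h₁.symm.trans h₂))

lemma part_inter_subset_adhesionSet (h12 : D.tree.Adj t₁ t₂) {s t : T}
    (hs : s ∈ D.side t₁ t₂ t₂) (ht : t ∈ D.side t₁ t₂ t₁) :
    D.part s ∩ D.part t ⊆ D.adhesionSet t₁ t₂ := by
  classical
  obtain ⟨w⟩ := D.isTree.connected.preconnected s t
  have he : s(t₁, t₂) ∈ w.bypass.edges := by
    by_contra he
    have hst : (D.cut t₁ t₂).Reachable s t := reachable_deleteEdges_iff_exists_walk.2 ⟨_, he⟩
    exact notMem_side_of_mem_side h12 ht ((ConnectedComponent.sound hst).symm.trans hs)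
  intro v hv
  exact ⟨D.part_path s t₁ t ⟨_, w.bypass_isPath⟩ (w.bypass.fst_mem_support_of_mem_edges he) hv,
    D.part_path s t₂ t ⟨_, w.bypass_isPath⟩ (w.bypass.snd_mem_support_of_mem_edges he) hv⟩

lemma exists_walk_side_of_mem_part {r a b : T} (ha : a ∈ D.side t₁ t₂ r)
    (hb : b ∈ D.side t₁ t₂ r) {v : V} (hva : v ∈ D.part a) (hvb : v ∈ D.part b) :
    ∃ w : ((D.cut t₁ t₂).induce (D.side t₁ t₂ r)).Walk ⟨a, ha⟩ ⟨b, hb⟩,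
       ∀ x ∈ w.support, v ∈ D.part x := by
  classical
  obtain ⟨w⟩ := ConnectedComponent.reachable_of_mem_supp _ ha hb
  let p := w.bypass
  have hp : (p.map (Hom.ofLE (deleteEdges_le _))).IsPath :=
    w.bypass_isPath.map fun _ _ h => h
  have hside : ∀ x ∈ p.support, x ∈ D.side t₁ t₂ r := fun x hx =>
    (ConnectedComponent.sound (p.takeUntil x hx).reachable).symm.trans ha
  refine ⟨p.induce _ hside, fun x hx => ?_⟩
  have hx' : x.val ∈ p.support := by
    rw [Walk.support_induce] at hx
    exact (List.mem_attachWith _ _).1 hx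
  exact D.part_path a x b ⟨_, hp⟩ (by simpa [Walk.support_map] using hx') ⟨hva, hvb⟩

lemma mem_adhesionSet_or_strictSide {v : V} {t : T} (hv : v ∈ D.part t)
    (ht : t ∈ D.side t₁ t₂ t₁) : v ∈ D.adhesionSet t₁ t₂ ∨ v ∈ D.strictSide t₁ t₂ :=
  or_iff_not_imp_left.2 fun hX => ⟨Set.mem_biUnion ht hv, hX⟩

lemma mem_piece_self {v : V} (hv : v ∈ D.strictSide t₁ t₂) :
    v ∈ D.piece t₁ t₂ (connectedComponentMk _ ⟨v, hv⟩) :=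
  Or.inl ⟨⟨v, hv⟩, rfl, rfl⟩

lemma mem_piece_of_adj {u v : V} (hu : u ∈ D.strictSide t₁ t₂) (huv : G.Adj u v)
    (hv : v ∈ D.adhesionSet t₁ t₂ ∨ v ∈ D.strictSide t₁ t₂) :
    v ∈ D.piece t₁ t₂ (connectedComponentMk _ ⟨u, hu⟩) := by
  rcases hv with hv | hv
  · exact Or.inr ⟨hv, u, ⟨⟨u, hu⟩, rfl, rfl⟩, huv.symm⟩
  · exact Or.inl ⟨⟨v, hv⟩,
      (ConnectedComponent.connectedComponentMk_eq_of_adj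
        (G := G.induce _) (v := ⟨u, hu⟩) (w := ⟨v, hv⟩) huv).symm, rfl⟩

lemma exists_adj_of_mem_piece {c : D.Comp t₁ t₂} {x : V} (hc : x ∈ D.piece t₁ t₂ c)
    (hx : x ∈ D.adhesionSet t₁ t₂) : ∃ y ∈ Subtype.val '' c.supp, G.Adj x y := by
  rcases hc with ⟨y, -, rfl⟩ | ⟨-, hy⟩
  · exact absurd hx y.2.2
  · exact hy

lemma piece_inter_subset {c c' : D.Comp t₁ t₂} (hcc : c ≠ c') :
    D.piece t₁ t₂ c ∩ D.piece t₁ t₂ c' ⊆ D.adhesionSet t₁ t₂ := by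
  rintro v ⟨⟨a, ha, rfl⟩ | ⟨hv, -⟩, ⟨b, hb, hab⟩ | ⟨hv', -⟩⟩
  · exact absurd (ha.symm.trans ((Subtype.ext hab : b = a) ▸ hb)) hcc
  · exact hv'
  · exact hv
  · exact hv

variable (D t₁ t₂)

abbrev SplitNode : Type := D.side t₁ t₂ t₂ ⊕ (D.side t₁ t₂ t₁ × D.Comp t₁ t₂)

def splitTree : SimpleGraph (D.SplitNode t₁ t₂) where
  Adj
    | .inl s, .inl s' => D.tree.Adj s s'
    | .inl s, .inr (t, _) | .inr (t, _), .inl s => s.val = t₂ ∧ t.val = t₁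
    | .inr (t, c), .inr (t', c') => c = c' ∧ D.tree.Adj t t'
  symm := ⟨by
    rintro (s | ⟨t, c⟩) (s' | ⟨t', c'⟩) h
    exacts [h.symm, h, h, ⟨h.1.symm, h.2.symm⟩]⟩
  loopless := ⟨by
    rintro (s | ⟨t, c⟩) h
    exacts [D.tree.loopless.irrefl _ h, D.tree.loopless.irrefl _ h.2]⟩

def splitPart : D.SplitNode t₁ t₂ → Set V
  | .inl s => D.part s
  | .inr (t, c) => D.part t ∩ D.piece t₁ t₂ c

variable {D t₁ t₂}

variable (D t₁ t₂) in
def inlHom : (D.cut t₁ t₂).induce (D.side t₁ t₂ t₂) →g D.splitTree t₁ t₂ where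
  toFun := .inl
  map_rel' h := h.1

variable (D t₁ t₂) in
def inrHom (c : D.Comp t₁ t₂) :
    (D.cut t₁ t₂).induce (D.side t₁ t₂ t₁) →g D.splitTree t₁ t₂ where
  toFun t := .inr (t, c)
  map_rel' h := ⟨rfl, h.1⟩

lemma splitTree_connected : (D.splitTree t₁ t₂).Connected := by
  let hub : D.SplitNode t₁ t₂ := .inl ⟨t₂, rfl⟩
  have : Nonempty (D.SplitNode t₁ t₂) := ⟨hub⟩
  suffices h : ∀ x, (D.splitTree t₁ t₂).Reachable x hub from
    ⟨fun x y => (h x).trans (h y).symm⟩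
  rintro (s | ⟨t, c⟩)
  · exact ((D.side t₁ t₂ t₂).connected_toSimpleGraph.preconnected s ⟨t₂, rfl⟩).map
      (D.inlHom t₁ t₂)
  · refine ((D.side t₁ t₂ t₁).connected_toSimpleGraph.preconnected t ⟨t₁, rfl⟩).map
      (D.inrHom t₁ t₂ c) |>.trans (Adj.reachable ?_)
    exact ⟨rfl, rfl⟩

open Classical in
variable (D t₁ t₂) in
/-- `o = none` collapses every copy of `T₁`, which is what the edges of `T₂` need. -/
noncomputable def collapse (o : Option (D.Comp t₁ t₂)) : D.SplitNode t₁ t₂ → T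
  | .inl s => s
  | .inr (t, c) => if some c = o then t else t₂

variable (D t₁ t₂) in
def Uncollapsed (o : Option (D.Comp t₁ t₂)) : D.SplitNode t₁ t₂ → Prop
  | .inl _ => True
  | .inr (_, c) => some c = o

lemma collapse_injOn (h12 : D.tree.Adj t₁ t₂) (o : Option (D.Comp t₁ t₂)) :
    {x | D.Uncollapsed t₁ t₂ o x}.InjOn (D.collapse t₁ t₂ o) := by
  rintro (s | ⟨t, c⟩) hx (s' | ⟨t', c'⟩) hy h <;>
    simp_all [collapse, Uncollapsed]
  · exact notMem_side_of_mem_side h12 (h ▸ t'.2) s.2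
  · exact notMem_side_of_mem_side h12 (h ▸ t.2) s'.2
  · exact Option.some.inj (hx.trans hy.symm)

lemma collapse_adj (h12 : D.tree.Adj t₁ t₂) (o : Option (D.Comp t₁ t₂))
    {x y : D.SplitNode t₁ t₂} (hxy : (D.splitTree t₁ t₂).Adj x y) :
    D.collapse t₁ t₂ o x = D.collapse t₁ t₂ o y ∨ D.Uncollapsed t₁ t₂ o x ∧
      D.Uncollapsed t₁ t₂ o y ∧ D.tree.Adj (D.collapse t₁ t₂ o x) (D.collapse t₁ t₂ o y) := by
  rcases x with s | ⟨t, c⟩ <;> rcases y with s' | ⟨t', c'⟩ <;> simp only [collapse, Uncollapsed]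
  · exact Or.inr ⟨trivial, trivial, hxy⟩
  · obtain ⟨hs, ht⟩ := hxy
    split_ifs with hc
    · exact Or.inr ⟨trivial, hc, by rw [hs, ht]; exact h12.symm⟩
    · exact Or.inl hs
  · obtain ⟨hs, ht⟩ := hxy
    split_ifs with hc
    · exact Or.inr ⟨hc, trivial, by rw [hs, ht]; exact h12⟩
    · exact Or.inl hs.symm
  · obtain ⟨rfl, hadj⟩ := hxy
    split_ifs with hc
    · exact Or.inr ⟨hc, hc, hadj⟩
    · exact Or.inl rfl

lemma exists_uncollapsed {x y : D.SplitNode t₁ t₂} (hxy : (D.splitTree t₁ t₂).Adj x y) :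
    ∃ o, D.Uncollapsed t₁ t₂ o x ∧ D.Uncollapsed t₁ t₂ o y := by
  rcases x with s | ⟨t, c⟩ <;> rcases y with s' | ⟨t', c'⟩
  · exact ⟨none, trivial, trivial⟩
  · exact ⟨some c', trivial, rfl⟩
  · exact ⟨some c, rfl, trivial⟩
  · exact ⟨some c, rfl, congrArg some hxy.1.symm⟩

lemma splitTree_isAcyclic (h12 : D.tree.Adj t₁ t₂) : (D.splitTree t₁ t₂).IsAcyclic :=
  isAcyclic_of_forall_adj_exists_injOn D.isTree.isAcyclic fun _ _ hxy =>
    let ⟨o, hx, hy⟩ := exists_uncollapsed hxy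
    ⟨D.collapse t₁ t₂ o, _, hx, hy, collapse_injOn h12 o, fun _ _ => collapse_adj h12 o⟩

lemma reachable_inl_inl {v : V} {s s' : D.side t₁ t₂ t₂} (hs : v ∈ D.part s)
    (hs' : v ∈ D.part s') :
    ((D.splitTree t₁ t₂).induce {x | v ∈ D.splitPart t₁ t₂ x}).Reachable ⟨.inl s, hs⟩
      ⟨.inl s', hs'⟩ := by
  obtain ⟨w, hw⟩ := exists_walk_side_of_mem_part s.2 s'.2 hs hs'
  exact w.reachable_induce_of_map (D.inlHom t₁ t₂) hw hs hs'

lemma reachable_inr_inr {v : V} {t t' : D.side t₁ t₂ t₁} {c : D.Comp t₁ t₂}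
    (ht : v ∈ D.splitPart t₁ t₂ (.inr (t, c))) (ht' : v ∈ D.splitPart t₁ t₂ (.inr (t', c))) :
    ((D.splitTree t₁ t₂).induce {x | v ∈ D.splitPart t₁ t₂ x}).Reachable ⟨.inr (t, c), ht⟩
      ⟨.inr (t', c), ht'⟩ := by
  obtain ⟨w, hw⟩ := exists_walk_side_of_mem_part t.2 t'.2 ht.1 ht'.1
  exact w.reachable_induce_of_map (D.inrHom t₁ t₂ c)
    (fun x hx => show v ∈ D.part x ∩ _ from ⟨hw x hx, ht.2⟩) ht ht'

lemma reachable_inl_t₂ {v : V} (hv : v ∈ D.adhesionSet t₁ t₂) (x : D.SplitNode t₁ t₂)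
    (hx : v ∈ D.splitPart t₁ t₂ x) :
    ((D.splitTree t₁ t₂).induce {x | v ∈ D.splitPart t₁ t₂ x}).Reachable ⟨x, hx⟩
      ⟨.inl ⟨t₂, rfl⟩, hv.2⟩ := by
  rcases x with s | ⟨t, c⟩
  · exact reachable_inl_inl hx hv.2
  · have ht₁ : v ∈ D.splitPart t₁ t₂ (.inr (⟨t₁, rfl⟩, c)) := ⟨hv.1, hx.2⟩
    exact (reachable_inr_inr hx ht₁).trans
      (Adj.reachable (by exact ⟨rfl, rfl⟩))

lemma preconnected_induce_splitPart (h12 : D.tree.Adj t₁ t₂) (v : V) :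
    ((D.splitTree t₁ t₂).induce {x | v ∈ D.splitPart t₁ t₂ x}).Preconnected := by
  rintro ⟨x, hx⟩ ⟨y, hy⟩
  by_cases hv : v ∈ D.adhesionSet t₁ t₂
  · exact (reachable_inl_t₂ hv x hx).trans (reachable_inl_t₂ hv y hy).symm
  rcases x with s | ⟨t, c⟩ <;> rcases y with s' | ⟨t', c'⟩
  · exact reachable_inl_inl hx hy
  · exact absurd (part_inter_subset_adhesionSet h12 s.2 t'.2 ⟨hx, hy.1⟩) hv
  · exact absurd (part_inter_subset_adhesionSet h12 s'.2 t.2 ⟨hy, hx.1⟩) hv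
  · obtain rfl | hcc := eq_or_ne c c'
    · exact reachable_inr_inr hx hy
    · exact absurd (piece_inter_subset hcc ⟨hx.2, hy.2⟩) hv

lemma splitPart_covers (v : V) : ∃ x, v ∈ D.splitPart t₁ t₂ x := by
  obtain ⟨t, hv⟩ := D.part_covers v
  rcases mem_side_or (t₁ := t₁) (t₂ := t₂) t with ht | ht
  · rcases mem_adhesionSet_or_strictSide hv ht with hX | hA
    · exact ⟨.inl ⟨t₂, rfl⟩, hX.2⟩
    · exact ⟨.inr (⟨t, ht⟩, _), hv, mem_piece_self hA⟩
  · exact ⟨.inl ⟨t, ht⟩, hv⟩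

lemma splitPart_edge {u v : V} (huv : G.Adj u v) :
    ∃ x, u ∈ D.splitPart t₁ t₂ x ∧ v ∈ D.splitPart t₁ t₂ x := by
  obtain ⟨t, hu, hv⟩ := D.part_edge huv
  rcases mem_side_or (t₁ := t₁) (t₂ := t₂) t with ht | ht
  · rcases mem_adhesionSet_or_strictSide hu ht with huX | huA
    · rcases mem_adhesionSet_or_strictSide hv ht with hvX | hvA
      · exact ⟨.inl ⟨t₂, rfl⟩, huX.2, hvX.2⟩
      · exact ⟨.inr (⟨t, ht⟩, _), ⟨hu, mem_piece_of_adj hvA huv.symm (.inl huX)⟩,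
          hv, mem_piece_self hvA⟩
    · exact ⟨.inr (⟨t, ht⟩, _), ⟨hu, mem_piece_self huA⟩,
        hv, mem_piece_of_adj huA huv (mem_adhesionSet_or_strictSide hv ht)⟩
  · exact ⟨.inl ⟨t, ht⟩, hu, hv⟩

variable (D) in
def split (h12 : D.tree.Adj t₁ t₂) : TreeDecomp G (D.SplitNode t₁ t₂) where
  tree := D.splitTree t₁ t₂
  isTree := ⟨splitTree_connected, splitTree_isAcyclic h12⟩
  part := D.splitPart t₁ t₂
  part_covers := splitPart_covers
  part_edge _ _ := splitPart_edge
  part_path _ b _ p hb _ hv := (splitTree_isAcyclic h12).support_subset_of_preconnected_induce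
    (preconnected_induce_splitPart h12 _) hv.1 hv.2 p b hb

lemma split_adhesionLT [Finite V] (h12 : D.tree.Adj t₁ t₂) {k : ℕ} (hD : D.AdhesionLT k) :
    (D.split h12).AdhesionLT k := by
  have hX := hD h12
  rintro (s | ⟨t, c⟩) (s' | ⟨t', c'⟩) hadj
  · exact hD hadj
  · obtain ⟨hs, ht'⟩ := hadj
    refine lt_of_le_of_lt (Set.ncard_le_ncard ?_) hX
    rintro v ⟨hv, hv', -⟩
    exact ⟨ht' ▸ hv', hs ▸ hv⟩
  · obtain ⟨hs', ht⟩ := hadj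
    refine lt_of_le_of_lt (Set.ncard_le_ncard ?_) hX
    rintro v ⟨⟨hv, -⟩, hv'⟩
    exact ⟨ht ▸ hv, hs' ▸ hv'⟩
  · exact lt_of_le_of_lt (Set.ncard_le_ncard
      (Set.inter_subset_inter Set.inter_subset_left Set.inter_subset_left)) (hD hadj.2)

variable (D t₁ t₂) in
def origin : D.SplitNode t₁ t₂ → T
  | .inl s => s
  | .inr (t, _) => t

section Fatness

variable (h12 : D.tree.Adj t₁ t₂)
  (hX : ∀ c : D.Comp t₁ t₂, ¬ D.adhesionSet t₁ t₂ ⊆ D.piece t₁ t₂ c)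
include hX

/-- If `V_t ⊄ piece c`, either `V_t ∩ piece c ⊊ V_t` with `|V_t| ≤ m`, or `V_t` lies in another
piece and `V_t ∩ piece c ⊆ X ∩ piece c ⊊ X`. -/
lemma subset_piece_of_le_ncard [Finite V] {m : ℕ} (hXm : (D.adhesionSet t₁ t₂).ncard ≤ m)
    (hmax : ∀ t ∈ D.side t₁ t₂ t₁, (∀ c, ¬ D.part t ⊆ D.piece t₁ t₂ c) → (D.part t).ncard ≤ m)
    {t : T} (ht : t ∈ D.side t₁ t₂ t₁) {c : D.Comp t₁ t₂}
    (hm : m ≤ (D.part t ∩ D.piece t₁ t₂ c).ncard) : D.part t ⊆ D.piece t₁ t₂ c := by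
  by_contra hsub
  by_cases hB : ∀ c', ¬ D.part t ⊆ D.piece t₁ t₂ c'
  · have : (D.part t ∩ D.piece t₁ t₂ c).ncard < (D.part t).ncard :=
      Set.ncard_lt_ncard (Set.inter_subset_left.ssubset_of_ne fun h => hsub (Set.inter_eq_left.1 h))
    have := hmax t ht hB
    omega
  · obtain ⟨c', hc'⟩ := not_forall_not.1 hB
    have hcc : c' ≠ c := by rintro rfl; exact hsub hc'
    have h₁ : D.part t ∩ D.piece t₁ t₂ c ⊆ D.adhesionSet t₁ t₂ ∩ D.piece t₁ t₂ c :=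
      fun v hv => ⟨piece_inter_subset hcc ⟨hc' hv.1, hv.2⟩, hv.2⟩
    have h₂ : (D.adhesionSet t₁ t₂ ∩ D.piece t₁ t₂ c).ncard < (D.adhesionSet t₁ t₂).ncard :=
      Set.ncard_lt_ncard (Set.inter_subset_left.ssubset_of_ne fun h => hX c (Set.inter_eq_left.1 h))
    have := Set.ncard_le_ncard h₁
    omega

lemma fatLexLT_split [Fintype V] [Finite T] :
    FatLexLT (Fintype.card V) (D.split h12).fatness D.fatness := by
  have ht₁ : t₁ ∈ D.side t₁ t₂ t₁ ∧ ∀ c, ¬ D.part t₁ ⊆ D.piece t₁ t₂ c :=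
    ⟨rfl, fun c h => hX c (Set.inter_subset_left.trans h)⟩
  obtain ⟨y₀, ⟨hy₀, hy₀B⟩, hmax⟩ := Set.exists_max_image
    {t | t ∈ D.side t₁ t₂ t₁ ∧ ∀ c, ¬ D.part t ⊆ D.piece t₁ t₂ c} (fun t => (D.part t).ncard)
    (Set.toFinite _) ⟨t₁, ht₁⟩
  set m := (D.part y₀).ncard
  have hXm : (D.adhesionSet t₁ t₂).ncard ≤ m :=
    (Set.ncard_le_ncard Set.inter_subset_left).trans (hmax t₁ ht₁)
  have hsub : ∀ t ∈ D.side t₁ t₂ t₁, ∀ c, m ≤ (D.part t ∩ D.piece t₁ t₂ c).ncard →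
      D.part t ⊆ D.piece t₁ t₂ c := fun t ht c =>
    subset_piece_of_le_ncard hX hXm (fun t ht hB => hmax t ⟨ht, hB⟩) ht
  have hm : m ≤ Fintype.card V := by
    simpa [Nat.card_eq_fintype_card] using Set.ncard_le_ncard (Set.subset_univ (D.part y₀))
  refine fatLexLT_of_proj (a := fun x => (D.splitPart t₁ t₂ x).ncard)
    (b := fun t => (D.part t).ncard) (f := D.origin t₁ t₂) hm ?_ ?_ ?_ rfl ?_
  · rintro (s | ⟨t, c⟩) hx
    · rfl
    · exact congrArg Set.ncard (Set.inter_eq_left.2 (hsub t t.2 c hx))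
  · rintro (s | ⟨t, c⟩) (s' | ⟨t', c'⟩) hx hx' h
    · exact congrArg Sum.inl (Subtype.ext h)
    · exact (notMem_side_of_mem_side h12 ((show (s : T) = t' from h) ▸ t'.2) s.2).elim
    · exact (notMem_side_of_mem_side h12 ((show (t : T) = s' from h) ▸ t.2) s'.2).elim
    · obtain rfl : t = t' := Subtype.ext h
      obtain rfl | hcc := eq_or_ne c c'
      · rfl
      have hX' : D.part t ⊆ D.adhesionSet t₁ t₂ := fun v hv =>
        piece_inter_subset hcc ⟨hsub t t.2 c hx hv, hsub t t.2 c' hx' hv⟩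
      have hXt : D.part t = D.adhesionSet t₁ t₂ := Set.eq_of_subset_of_ncard_le hX'
        (hXm.trans (hx.trans (Set.ncard_le_ncard Set.inter_subset_left)))
      exact (hX c (hXt ▸ hsub t t.2 c hx)).elim
  · intro y hy
    rcases mem_side_or (t₁ := t₁) (t₂ := t₂) y with hy₁ | hy₂
    · have : ∃ c, D.part y ⊆ D.piece t₁ t₂ c := by
        by_contra! hB
        exact absurd (hmax y ⟨hy₁, hB⟩) (not_le.2 hy)
      obtain ⟨c, hc⟩ := this
      refine ⟨.inr (⟨y, hy₁⟩, c), rfl, ?_⟩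
      exact hy.le.trans_eq (congrArg Set.ncard (Set.inter_eq_left.2 hc)).symm
    · exact ⟨.inl ⟨y, hy₂⟩, rfl, hy.le⟩
  · rintro (s | ⟨t, c⟩) rfl
    · exact (notMem_side_of_mem_side h12 hy₀ s.2).elim
    · by_contra! hle
      exact hy₀B c (hsub t t.2 c hle)

end Fatness

end TreeDecomp

/-- Let `(T, V)` be a `k`-atomic tree-decomposition of `G` and `t₁t₂` an
edge of its tree. With `T₁` the component of `T - t₁t₂` containing `t₁`,
`G₁ = ⋃_{t ∈ T₁} V_t` and `X = V_{t₁} ∩ V_{t₂}`, there is a connected component `C` of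
the subgraph of `G` induced on `G₁ \ X` such that every `x ∈ X` has a neighbor in `C`. -/
theorem stmt_7 {V T : Type} [Fintype V] [Fintype T] (G : SimpleGraph V) (k : ℕ)
    (D : TreeDecomp G T) (hD : D.IsAtomic k) (t₁ t₂ : T) (h12 : D.tree.Adj t₁ t₂) :
    ∃ C : Set V,
      IsCompOf G
        ((⋃ t ∈ {t : T | ∃ p : D.tree.Walk t₁ t, s(t₁, t₂) ∉ p.edges}, D.part t) \
          (D.part t₁ ∩ D.part t₂)) C ∧
      ∀ x ∈ D.part t₁ ∩ D.part t₂, ∃ y ∈ C, G.Adj x y := by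
  have hside : {t : T | ∃ p : D.tree.Walk t₁ t, s(t₁, t₂) ∉ p.edges} = D.side t₁ t₂ t₁ :=
    Set.ext fun _ => TreeDecomp.mem_side_iff.symm
  rw [hside]
  by_contra hcon
  have hX : ∀ c : D.Comp t₁ t₂, ¬ D.adhesionSet t₁ t₂ ⊆ D.piece t₁ t₂ c := fun c hc =>
    hcon ⟨_, c.isCompOf_image, fun x hx => TreeDecomp.exists_adj_of_mem_piece (hc hx) hx⟩
  exact hD.2 _ (Fintype.ofFinite _) (D.split h12) (TreeDecomp.split_adhesionLT h12 hD.1)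
    (TreeDecomp.fatLexLT_split h12 hX)
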